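/- (Corollary 4) For every k ≥ 0, the least positive integer m such that φ^{(m)}(w_k) = w_k equals L_k, where L_k is the smallest power of 2 strictly greater than k; that is, L_k belongs to the set { m > 0 : φ^{(m)}(w_k) = w_k } and is a lower bound for it. -/

import Mathlib

/-!
Write `φ = 1 + S` with `S` the left shift. In characteristic two, `φ^(2^s) = 1 + S^(2^s)`, so
`φ^(2^s) w_k = w_k + w_{k - 2^s}` (the second term absent when `2^s > k`): `w_k` is fixed by
`φ^(2^s)` exactly when `k < 2^s`. Since `w_k` is periodic with period `L_k`, its minimal period
divides `L_k`, hence is itself a power of two exceeding `k`, and therefore equals `L_k`.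
-/

/-- The difference operator: `phi w n = w n + w (n+1)` (in `F_2`, sum equals
 absolute difference). -/
def phi (w : ℕ → ZMod 2) : ℕ → ZMod 2 := fun n => w n + w (n + 1)


/-- The indicator sequence of `k`. -/
def wk (k : ℕ) : ℕ → ZMod 2 := fun n => if n = k then 1 else 0

/-- `L k`: the smallest power of `2` strictly greater than `k`. -/
noncomputable def L (k : ℕ) : ℕ := sInf {m : ℕ | (∃ s : ℕ, m = 2 ^ s) ∧ k < m}

open Function

theorem phi_iterate_two_pow_apply (s : ℕ) (w : ℕ → ZMod 2) (n : ℕ) :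
    phi^[2 ^ s] w n = w n + w (n + 2 ^ s) := by
  induction s generalizing w n with
  | zero => rfl
  | succ s ih =>
    rw [pow_succ, mul_two, iterate_add_apply, ih, ih, ih, ← add_assoc n, add_assoc,
      CharTwo.add_cancel_left]

theorem isPeriodicPt_phi_wk_two_pow_iff {k s : ℕ} :
    IsPeriodicPt phi (2 ^ s) (wk k) ↔ k < 2 ^ s := by
  constructor
  · intro h
    by_contra! hle
    have := congrFun h (k - 2 ^ s)
    simp [phi_iterate_two_pow_apply, wk, Nat.sub_add_cancel hle] at this
  · intro h
    funext n
    have hn : wk k (n + 2 ^ s) = 0 := if_neg (by omega)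
    rw [phi_iterate_two_pow_apply, hn, add_zero]

theorem L_eq_two_pow_and_lt (k : ℕ) : (∃ s, L k = 2 ^ s) ∧ k < L k :=
  Nat.sInf_mem (s := {m | (∃ s : ℕ, m = 2 ^ s) ∧ k < m}) ⟨2 ^ k, ⟨k, rfl⟩, Nat.lt_two_pow_self⟩

theorem L_le_two_pow {k s : ℕ} (h : k < 2 ^ s) : L k ≤ 2 ^ s :=
  Nat.sInf_le ⟨⟨s, rfl⟩, h⟩

theorem minimalPeriod_phi_wk (k : ℕ) : minimalPeriod phi (wk k) = L k := by
  obtain ⟨⟨s, hs⟩, hkL⟩ := L_eq_two_pow_and_lt k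
  have hL : IsPeriodicPt phi (L k) (wk k) := hs ▸ isPeriodicPt_phi_wk_two_pow_iff.2 (hs ▸ hkL)
  obtain ⟨t, -, ht⟩ := (Nat.dvd_prime_pow Nat.prime_two).1 (hs ▸ hL.minimalPeriod_dvd)
  have hkt : k < 2 ^ t := isPeriodicPt_phi_wk_two_pow_iff.1 (ht ▸ isPeriodicPt_minimalPeriod _ _)
  exact le_antisymm (hL.minimalPeriod_le (by omega)) (ht ▸ L_le_two_pow hkt)

theorem least_period (k : ℕ) :
    phi^[L k] (wk k) = wk k ∧
      ∀ m : ℕ, 0 < m → phi^[m] (wk k) = wk k → L k ≤ m := by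
  rw [← minimalPeriod_phi_wk]
  exact ⟨isPeriodicPt_minimalPeriod phi (wk k), fun m hm h => IsPeriodicPt.minimalPeriod_le hm h⟩
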